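/- arXiv:1901.01992 — 2 statements merged into one kernel-verified Lean document; each statement's English description precedes it below -/
import Mathlib

section
/- Let u ∈ R^n satisfy Σ_i u(i) = 1 and Σ_{i ∈ N} |u(i)| ≤ ε' where N = {i : u(i) < 0}, and let M be an n×m real matrix with ‖M_{i,:}‖_1 ≤ 2 for every row i. If ‖u^T M‖_1 ≤ ε'', then the normalized positive part h = [u]_+/‖[u]_+‖_1 satisfies ‖h^T M‖_1 ≤ (2ε' + ε'')/(1 + ε') ≤ 2ε' + ε''. -/
/-- If `u` sums to 1 with negative mass at most `ε'`, `M` has rows of L1 norm at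
most 2, and `‖uᵀM‖₁ ≤ ε''`, then the normalized positive part `h` satisfies
`‖hᵀM‖₁ ≤ (2ε' + ε'')/(1 + ε') ≤ 2ε' + ε''`. -/
theorem stmt2 (n m : ℕ) (u : Fin n → ℝ) (M : Matrix (Fin n) (Fin m) ℝ) (ε' ε'' : ℝ)
    (hsum : ∑ i, u i = 1)
    (hneg : ∑ i ∈ Finset.univ.filter (fun i => u i < 0), |u i| ≤ ε')
    (hrow : ∀ i, ∑ j, |M i j| ≤ 2)
    (huM : ∑ j, |∑ i, u i * M i j| ≤ ε'') :
    (∑ j, |∑ i, (max (u i) 0 / (∑ k, max (u k) 0)) * M i j| ≤ (2 * ε' + ε'') / (1 + ε')) ∧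
    (2 * ε' + ε'') / (1 + ε') ≤ 2 * ε' + ε'' := by
  set ν := ∑ i ∈ Finset.univ.filter (fun i => u i < 0), |u i| with hνdef
  have hν0 : 0 ≤ ν := Finset.sum_nonneg fun i _ => abs_nonneg _
  have hε'0 : 0 ≤ ε' := hν0.trans hneg
  have hε''0 : 0 ≤ ε'' := le_trans (Finset.sum_nonneg fun j _ => abs_nonneg _) huM
  have hmax : ∀ a : ℝ, max a 0 = a + max (-a) 0 := by
    intro a
    rcases le_total a 0 with h | h
    · rw [max_eq_right h, max_eq_left (neg_nonneg.2 h)]; ring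
    · rw [max_eq_left h, max_eq_right (neg_nonpos.2 h)]; ring
  have hnu : ∑ i, max (-u i) 0 = ν := by
    rw [hνdef, ← Finset.sum_filter_add_sum_filter_not Finset.univ (fun i => u i < 0)
      (fun i => max (-u i) 0)]
    have ha : ∑ i ∈ Finset.univ.filter (fun i => u i < 0), max (-u i) 0
        = ∑ i ∈ Finset.univ.filter (fun i => u i < 0), |u i| := by
      refine Finset.sum_congr rfl fun i hi => ?_
      rw [Finset.mem_filter] at hi
      rw [max_eq_left (by linarith [hi.2]), abs_of_neg hi.2]
    have hb : ∑ i ∈ Finset.univ.filter (fun i => ¬ u i < 0), max (-u i) 0 = 0 := by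
      refine Finset.sum_eq_zero fun i hi => ?_
      rw [Finset.mem_filter] at hi
      have := hi.2
      push_neg at this
      rw [max_eq_right (by linarith)]
    rw [ha, hb, add_zero]
  have hS : ∑ k, max (u k) 0 = 1 + ν := by
    have h : ∑ k, max (u k) 0 = ∑ k, (u k + max (-u k) 0) :=
      Finset.sum_congr rfl fun k _ => hmax (u k)
    rw [h, Finset.sum_add_distrib, hsum, hnu]
  have hSpos : (0:ℝ) < ∑ k, max (u k) 0 := by rw [hS]; linarith
  have hLHS : ∑ j, |∑ i, (max (u i) 0 / (∑ k, max (u k) 0)) * M i j|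
      = (∑ j, |∑ i, max (u i) 0 * M i j|) / (∑ k, max (u k) 0) := by
    rw [Finset.sum_div]
    refine Finset.sum_congr rfl fun j _ => ?_
    have h : ∑ i, (max (u i) 0 / (∑ k, max (u k) 0)) * M i j
        = (∑ i, max (u i) 0 * M i j) / (∑ k, max (u k) 0) := by
      rw [Finset.sum_div]
      exact Finset.sum_congr rfl fun i _ => div_mul_eq_mul_div _ _ _
    rw [h, abs_div, abs_of_pos hSpos]
  set T := ∑ j, |∑ i, max (u i) 0 * M i j| with hT
  have hT1 : T ≤ ε'' + 2 * ν := by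
    have h1 : ∀ j, |∑ i, max (u i) 0 * M i j|
        ≤ |∑ i, u i * M i j| + ∑ i, max (-u i) 0 * |M i j| := by
      intro j
      have h2 : ∑ i, max (u i) 0 * M i j = (∑ i, u i * M i j) + ∑ i, max (-u i) 0 * M i j := by
        rw [← Finset.sum_add_distrib]
        refine Finset.sum_congr rfl fun i _ => ?_
        rw [hmax (u i)]; ring
      rw [h2]
      refine le_trans (abs_add_le _ _) (add_le_add_right ?_ _)
      refine le_trans (Finset.abs_sum_le_sum_abs _ _) ?_
      refine Finset.sum_le_sum fun i _ => ?_
      rw [abs_mul, abs_of_nonneg (le_max_right _ _)]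
    calc T ≤ ∑ j, (|∑ i, u i * M i j| + ∑ i, max (-u i) 0 * |M i j|) :=
          Finset.sum_le_sum fun j _ => h1 j
      _ = (∑ j, |∑ i, u i * M i j|) + ∑ i, max (-u i) 0 * ∑ j, |M i j| := by
          rw [Finset.sum_add_distrib, Finset.sum_comm]
          congr 1
          exact Finset.sum_congr rfl fun i _ => (Finset.mul_sum _ _ _).symm
      _ ≤ ε'' + ∑ i, max (-u i) 0 * 2 := by
          refine add_le_add huM (Finset.sum_le_sum fun i _ => ?_)
          exact mul_le_mul_of_nonneg_left (hrow i) (le_max_right _ _)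
      _ = ε'' + 2 * ν := by rw [← Finset.sum_mul, hnu]; ring
  have hT2 : T ≤ 2 * (1 + ν) := by
    calc T ≤ ∑ j, ∑ i, max (u i) 0 * |M i j| := by
          refine Finset.sum_le_sum fun j _ => ?_
          refine le_trans (Finset.abs_sum_le_sum_abs _ _) ?_
          refine Finset.sum_le_sum fun i _ => ?_
          rw [abs_mul, abs_of_nonneg (le_max_right _ _)]
      _ = ∑ i, max (u i) 0 * ∑ j, |M i j| := by
          rw [Finset.sum_comm]
          exact Finset.sum_congr rfl fun i _ => (Finset.mul_sum _ _ _).symm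
      _ ≤ ∑ i, max (u i) 0 * 2 := Finset.sum_le_sum fun i _ =>
          mul_le_mul_of_nonneg_left (hrow i) (le_max_right _ _)
      _ = 2 * (1 + ν) := by rw [← Finset.sum_mul, hS]; ring
  have hT0 : 0 ≤ T := Finset.sum_nonneg fun j _ => abs_nonneg _
  constructor
  · rw [hLHS, hS, div_le_div_iff₀ (by linarith) (by linarith)]
    rcases le_total ε'' 2 with hc | hc
    · nlinarith [mul_nonneg (sub_nonneg.2 hneg) (sub_nonneg.2 hc),
        mul_le_mul_of_nonneg_right hT1 (by linarith : (0:ℝ) ≤ 1 + ε')]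
    · nlinarith [mul_le_mul_of_nonneg_right hT2 (by linarith : (0:ℝ) ≤ 1 + ε')]
  · rw [div_le_iff₀ (by linarith : (0:ℝ) < 1 + ε')]
    nlinarith
end

section
/- Let ν ∈ R^{XA} (indexed by state-action pairs over finite sets of X states and A actions), let N = {(x,a) : ν(x,a) ≤ 0} with Σ_{(x,a)∈N} |ν(x,a)| = ε', and suppose ‖(B - γP)^T ν - α‖_1 = ε'' where B is the marginalization matrix, P a row-stochastic transition matrix, γ ∈ (0,1), and α a probability distribution on states. Assume every state x has some action a with ν(x,a) > 0. Define the policy π_ν(a|x) = [ν(x,a)]_+ / Σ_{a'} [ν(x,a')]_+ and let ν_{π_ν}(x,a) = Σ_{x'} α(x') Σ_{t≥1} γ^{t-1} P^{π_ν}(x_t = x, a_t = a | x_1 = x') be the expected discounted visitation frequencies of π_ν started from α. Then ‖ν_{π_ν} - ν‖_1 ≤ (3ε' + ε'')/(1 - γ). -/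
open Matrix

lemma l1_vecMul_le {X Y : Type*} [Fintype X] [Fintype Y] (Q : Matrix X Y ℝ)
    (hQ : ∀ i j, 0 ≤ Q i j) (hrow : ∀ i, ∑ j, Q i j = 1) (v : X → ℝ) :
    ∑ j, |(v ᵥ* Q) j| ≤ ∑ i, |v i| := by
  calc ∑ j, |(v ᵥ* Q) j| ≤ ∑ j, ∑ i, |v i| * Q i j := by
        refine Finset.sum_le_sum fun j _ => ?_
        refine (Finset.abs_sum_le_sum_abs _ _).trans ?_
        refine Finset.sum_le_sum fun i _ => ?_
        rw [abs_mul, abs_of_nonneg (hQ i j)]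
    _ = ∑ i, |v i| * ∑ j, Q i j := by rw [Finset.sum_comm]; simp [Finset.mul_sum]
    _ = ∑ i, |v i| := by simp [hrow]

lemma vecMul_nonneg_sum {X Y : Type*} [Fintype X] [Fintype Y] (Q : Matrix X Y ℝ)
    (hQ : ∀ i j, 0 ≤ Q i j) (hrow : ∀ i, ∑ j, Q i j = 1) (v : X → ℝ) (hv : ∀ i, 0 ≤ v i) :
    (∀ j, 0 ≤ (v ᵥ* Q) j) ∧ ∑ j, (v ᵥ* Q) j = ∑ i, v i := by
  constructor
  · intro j
    exact Finset.sum_nonneg fun i _ => mul_nonneg (hv i) (hQ i j)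
  · simp only [vecMul, dotProduct]
    rw [Finset.sum_comm]
    simp [← Finset.mul_sum, hrow]

/-- If `ν` has negative mass `ε'`, constraint violation `‖(B - γP)ᵀν - α‖₁ = ε''`,
and every state has an action with `ν(x,a) > 0`, then the discounted visitation
frequencies of the policy `π_ν` started from `α` satisfy
`‖ν_{π_ν} - ν‖₁ ≤ (3ε' + ε'')/(1 - γ)`. -/
theorem stmt7 {X A : Type*} [Fintype X] [Fintype A] [DecidableEq X] [DecidableEq A]
    (ν : X × A → ℝ) (γ : ℝ) (hγ0 : 0 < γ) (hγ1 : γ < 1)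
    (P : Matrix (X × A) X ℝ) (hP : ∀ p x, 0 ≤ P p x) (hProw : ∀ p, ∑ x, P p x = 1)
    (B : Matrix (X × A) X ℝ) (hB : ∀ p x, B p x = if p.1 = x then 1 else 0)
    (α : X → ℝ) (hα : ∀ x, 0 ≤ α x) (hα1 : ∑ x, α x = 1)
    (ε' ε'' : ℝ)
    (hε' : ∑ p ∈ Finset.univ.filter (fun p => ν p ≤ 0), |ν p| = ε')
    (hε'' : ∑ x, |(∑ p, (B p x - γ * P p x) * ν p) - α x| = ε'')
    (hpos : ∀ x, ∃ a, 0 < ν (x, a))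
    (π : X → A → ℝ) (hπ : ∀ x a, π x a = max (ν (x, a)) 0 / ∑ a', max (ν (x, a')) 0)
    (M : Matrix X (X × A) ℝ) (hM : ∀ x p, M x p = if p.1 = x then π x p.2 else 0)
    (νπ : X × A → ℝ)
    (hνπ : ∀ p, νπ p = ∑' t : ℕ, γ ^ t * (α ᵥ* (M * (P * M) ^ t)) p) :
    ∑ p, |νπ p - ν p| ≤ (3 * ε' + ε'') / (1 - γ) := by
  classical
  have h1γ : 0 < 1 - γ := by linarith
  have hmaxid : ∀ a : ℝ, max a 0 = a + max (-a) 0 := by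
    intro a
    rcases le_total a 0 with h | h
    · rw [max_eq_right h, max_eq_left (neg_nonneg.mpr h)]; ring
    · rw [max_eq_left h, max_eq_right (neg_nonpos.mpr h)]; ring
  -- negative part mass
  have hε'm : ∑ p : X × A, max (-ν p) 0 = ε' := by
    rw [← hε', Finset.sum_filter]
    refine Finset.sum_congr rfl fun p _ => ?_
    by_cases h : ν p ≤ 0
    · rw [if_pos h, abs_of_nonpos h, max_eq_left (neg_nonneg.mpr h)]
    · rw [if_neg h, max_eq_right (neg_nonpos.mpr (le_of_not_ge h))]
  have hε'nn : 0 ≤ ε' := by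
    rw [← hε'm]
    exact Finset.sum_nonneg fun p _ => le_max_right _ _
  -- denominators positive
  have hs_pos : ∀ x, 0 < ∑ a', max (ν (x, a')) 0 := by
    intro x
    obtain ⟨a, ha⟩ := hpos x
    have h1 : max (ν (x, a)) 0 ≤ ∑ a', max (ν (x, a')) 0 :=
      Finset.single_le_sum (f := fun a' => max (ν (x, a')) 0)
        (fun a' _ => le_max_right _ _) (Finset.mem_univ a)
    exact lt_of_lt_of_le (lt_max_of_lt_left ha) h1
  have hπn : ∀ x a, 0 ≤ π x a := by
    intro x a; rw [hπ]
    exact div_nonneg (le_max_right _ _) (hs_pos x).le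
  have hπ1 : ∀ x, ∑ a, π x a = 1 := by
    intro x
    simp only [hπ]
    rw [← Finset.sum_div, div_self (hs_pos x).ne']
  -- M is row stochastic
  have hMn : ∀ x p, 0 ≤ M x p := by
    intro x p; rw [hM]
    split
    · exact hπn _ _
    · exact le_refl 0
  have hMrow : ∀ x, ∑ p : X × A, M x p = 1 := by
    intro x
    rw [Fintype.sum_prod_type]
    have h : ∀ x', ∑ a, M x (x', a) = if x' = x then 1 else 0 := by
      intro x'
      by_cases h : x' = x <;> simp [hM, h, hπ1]
    simp [h]
  -- Q := P * M is row stochastic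
  set Q : Matrix (X × A) (X × A) ℝ := P * M with hQdef
  have hQn : ∀ q p, 0 ≤ Q q p := by
    intro q p
    rw [hQdef, Matrix.mul_apply]
    exact Finset.sum_nonneg fun x _ => mul_nonneg (hP q x) (hMn x p)
  have hQrow : ∀ q, ∑ p : X × A, Q q p = 1 := by
    intro q
    simp only [hQdef, Matrix.mul_apply]
    rw [Finset.sum_comm]
    calc ∑ x, ∑ p : X × A, P q x * M x p = ∑ x, P q x := by
          refine Finset.sum_congr rfl fun x _ => ?_
          rw [← Finset.mul_sum, hMrow, mul_one]
      _ = 1 := hProw q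
  -- the iterates W t
  set W : ℕ → (X × A) → ℝ := fun t => α ᵥ* (M * Q ^ t) with hWdef
  have hνπ' : ∀ p, νπ p = ∑' t : ℕ, γ ^ t * W t p := fun p => hνπ p
  have hW0 : W 0 = α ᵥ* M := by
    show α ᵥ* (M * Q ^ 0) = α ᵥ* M
    rw [pow_zero, Matrix.mul_one]
  have hWsucc : ∀ t, W (t + 1) = W t ᵥ* Q := by
    intro t
    show α ᵥ* (M * Q ^ (t + 1)) = (α ᵥ* (M * Q ^ t)) ᵥ* Q
    rw [pow_succ, ← Matrix.mul_assoc, ← Matrix.vecMul_vecMul]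
  have hWfact : ∀ t, (∀ p, 0 ≤ W t p) ∧ ∑ p, W t p = 1 := by
    intro t
    induction t with
    | zero =>
      rw [hW0]
      obtain ⟨h1, h2⟩ := vecMul_nonneg_sum M hMn hMrow α hα
      exact ⟨h1, by rw [h2, hα1]⟩
    | succ t ih =>
      rw [hWsucc t]
      obtain ⟨h1, h2⟩ := vecMul_nonneg_sum Q hQn hQrow (W t) ih.1
      exact ⟨h1, by rw [h2, ih.2]⟩
  have hWle1 : ∀ t p, W t p ≤ 1 := by
    intro t p
    rw [← (hWfact t).2]
    exact Finset.single_le_sum (fun q _ => (hWfact t).1 q) (Finset.mem_univ p)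
  have hsm : ∀ p, Summable (fun t : ℕ => γ ^ t * W t p) := by
    intro p
    refine Summable.of_nonneg_of_le
      (fun t => mul_nonneg (pow_nonneg hγ0.le t) ((hWfact t).1 p)) (fun t => ?_)
      (summable_geometric_of_lt_one hγ0.le hγ1)
    calc γ ^ t * W t p ≤ γ ^ t * 1 :=
          mul_le_mul_of_nonneg_left (hWle1 t p) (pow_nonneg hγ0.le t)
      _ = γ ^ t := mul_one _
  -- fixed point equation for νπ
  have hfix1 : ∀ p, νπ p = (α ᵥ* M) p + γ * (νπ ᵥ* Q) p := by
    intro p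
    have h1 : (νπ ᵥ* Q) p = ∑' t : ℕ, γ ^ t * (W t ᵥ* Q) p := by
      have hQQ : (νπ ᵥ* Q) p = ∑ q, (∑' t : ℕ, γ ^ t * W t q) * Q q p := by
        simp only [vecMul, dotProduct]
        exact Finset.sum_congr rfl fun q _ => by rw [hνπ' q]
      rw [hQQ]
      have hsq : ∀ q ∈ Finset.univ, Summable (fun t : ℕ => γ ^ t * W t q * Q q p) :=
        fun q _ => (hsm q).mul_right _
      calc ∑ q, (∑' t : ℕ, γ ^ t * W t q) * Q q p
          = ∑ q, ∑' t : ℕ, γ ^ t * W t q * Q q p := by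
            refine Finset.sum_congr rfl fun q _ => ?_
            rw [← tsum_mul_right]
        _ = ∑' t : ℕ, ∑ q, γ ^ t * W t q * Q q p := (Summable.tsum_finsetSum hsq).symm
        _ = ∑' t : ℕ, γ ^ t * (W t ᵥ* Q) p := by
            refine tsum_congr fun t => ?_
            simp only [vecMul, dotProduct, Finset.mul_sum, mul_assoc]
    have h0 : γ ^ 0 * W 0 p = (α ᵥ* M) p := by
      rw [pow_zero, one_mul, hW0]
    have h2 : ∀ t : ℕ, γ ^ (t + 1) * W (t + 1) p = γ * (γ ^ t * (W t ᵥ* Q) p) := by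
      intro t; rw [hWsucc t, pow_succ]; ring
    rw [hνπ' p, Summable.tsum_eq_zero_add (hsm p), h0]
    congr 1
    rw [h1]
    calc ∑' t : ℕ, γ ^ (t + 1) * W (t + 1) p
        = ∑' t : ℕ, γ * (γ ^ t * (W t ᵥ* Q) p) := tsum_congr h2
      _ = γ * ∑' t : ℕ, γ ^ t * (W t ᵥ* Q) p := tsum_mul_left
  -- approximate fixed point for νp := max ν 0
  set e : X → ℝ := fun x =>
    (∑ a, max (ν (x, a)) 0) - α x - γ * ∑ q : X × A, P q x * max (ν q) 0 with hedef
  have hsM : ∀ p : X × A, ∑ x, (∑ a, max (ν (x, a)) 0) * M x p = max (ν p) 0 := by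
    intro p
    have h : ∀ x, (∑ a, max (ν (x, a)) 0) * M x p
        = if p.1 = x then max (ν p) 0 else 0 := by
      intro x
      rw [hM]
      by_cases h : p.1 = x
      · subst h
        rw [if_pos rfl, if_pos rfl, hπ, mul_comm, div_mul_cancel₀ _ (hs_pos p.1).ne']
      · rw [if_neg h, if_neg h, mul_zero]
    simp [h]
  have hfix2 : ∀ p : X × A, max (ν p) 0
      = (α ᵥ* M) p + γ * ((fun q => max (ν q) 0) ᵥ* Q) p + (e ᵥ* M) p := by
    intro p
    have hQexp : ((fun q => max (ν q) 0) ᵥ* Q) p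
        = ∑ x, (∑ q : X × A, P q x * max (ν q) 0) * M x p := by
      simp only [vecMul, dotProduct, hQdef, Matrix.mul_apply]
      calc ∑ q : X × A, max (ν q) 0 * ∑ x, P q x * M x p
          = ∑ q : X × A, ∑ x, max (ν q) 0 * (P q x * M x p) := by
            simp [Finset.mul_sum]
        _ = ∑ x, ∑ q : X × A, max (ν q) 0 * (P q x * M x p) := Finset.sum_comm
        _ = ∑ x, (∑ q : X × A, P q x * max (ν q) 0) * M x p := by
            refine Finset.sum_congr rfl fun x _ => ?_
            rw [Finset.sum_mul]
            exact Finset.sum_congr rfl fun q _ => by ring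
    rw [hQexp]
    have key : (α ᵥ* M) p + γ * (∑ x, (∑ q : X × A, P q x * max (ν q) 0) * M x p)
        + (e ᵥ* M) p = ∑ x, (∑ a, max (ν (x, a)) 0) * M x p := by
      simp only [vecMul, dotProduct, hedef, Finset.mul_sum]
      rw [← Finset.sum_add_distrib, ← Finset.sum_add_distrib]
      refine Finset.sum_congr rfl fun x _ => ?_
      simp only [mul_assoc, ← Finset.mul_sum]
      ring
    rw [key, hsM]
  -- bound on e
  have hBsum : ∀ x, ∑ p : X × A, B p x * ν p = ∑ a, ν (x, a) := by
    intro x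
    rw [Fintype.sum_prod_type]
    have h : ∀ x', ∑ a, B (x', a) x * ν (x', a) = if x' = x then ∑ a, ν (x', a) else 0 := by
      intro x'
      by_cases h : x' = x <;> simp [hB, h]
    simp [h]
  have he_eq : ∀ x, e x = ((∑ p, (B p x - γ * P p x) * ν p) - α x)
      + (∑ a, max (-ν (x, a)) 0) - γ * ∑ q : X × A, P q x * max (-ν q) 0 := by
    intro x
    have h1 : ∑ a, max (ν (x, a)) 0 = (∑ a, ν (x, a)) + ∑ a, max (-ν (x, a)) 0 := by
      rw [← Finset.sum_add_distrib]
      exact Finset.sum_congr rfl fun a _ => hmaxid _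
    have h2 : ∑ q : X × A, P q x * max (ν q) 0
        = (∑ q : X × A, P q x * ν q) + ∑ q : X × A, P q x * max (-ν q) 0 := by
      rw [← Finset.sum_add_distrib]
      refine Finset.sum_congr rfl fun q _ => ?_
      rw [hmaxid (ν q)]; ring
    have h3 : ∑ p, (B p x - γ * P p x) * ν p
        = (∑ a, ν (x, a)) - γ * ∑ q : X × A, P q x * ν q := by
      simp only [sub_mul]
      rw [Finset.sum_sub_distrib, hBsum, Finset.mul_sum]
      congr 1
      exact Finset.sum_congr rfl fun q _ => by ring
    simp only [hedef]
    rw [h1, h2, h3]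
    ring
  have hn : ∑ x, ∑ a, max (-ν (x, a)) 0 = ε' := by
    rw [← hε'm]
    exact (Fintype.sum_prod_type fun p : X × A => max (-ν p) 0).symm
  have hm : ∑ x, ∑ q : X × A, P q x * max (-ν q) 0 = ε' := by
    rw [Finset.sum_comm]
    calc ∑ q : X × A, ∑ x, P q x * max (-ν q) 0 = ∑ q : X × A, max (-ν q) 0 := by
          refine Finset.sum_congr rfl fun q _ => ?_
          rw [← Finset.sum_mul, hProw, one_mul]
      _ = ε' := hε'm
  have hebound : ∑ x, |e x| ≤ ε'' + (1 + γ) * ε' := by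
    have step : ∑ x, |e x| ≤ ∑ x, (|(∑ p, (B p x - γ * P p x) * ν p) - α x|
        + (∑ a, max (-ν (x, a)) 0) + γ * ∑ q : X × A, P q x * max (-ν q) 0) := by
      refine Finset.sum_le_sum fun x _ => ?_
      rw [he_eq x]
      have hnn : 0 ≤ ∑ a, max (-ν (x, a)) 0 :=
        Finset.sum_nonneg fun a _ => le_max_right _ _
      have hmn : 0 ≤ γ * ∑ q : X × A, P q x * max (-ν q) 0 :=
        mul_nonneg hγ0.le (Finset.sum_nonneg fun q _ =>
          mul_nonneg (hP q x) (le_max_right _ _))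
      calc |((∑ p, (B p x - γ * P p x) * ν p) - α x + ∑ a, max (-ν (x, a)) 0)
            - γ * ∑ q : X × A, P q x * max (-ν q) 0|
          ≤ |((∑ p, (B p x - γ * P p x) * ν p) - α x + ∑ a, max (-ν (x, a)) 0)|
            + |γ * ∑ q : X × A, P q x * max (-ν q) 0| := abs_sub _ _
        _ ≤ |(∑ p, (B p x - γ * P p x) * ν p) - α x| + |∑ a, max (-ν (x, a)) 0|
            + |γ * ∑ q : X × A, P q x * max (-ν q) 0| := by
            have := abs_add_le ((∑ p, (B p x - γ * P p x) * ν p) - α x)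
              (∑ a, max (-ν (x, a)) 0)
            linarith
        _ = |(∑ p, (B p x - γ * P p x) * ν p) - α x| + (∑ a, max (-ν (x, a)) 0)
            + γ * ∑ q : X × A, P q x * max (-ν q) 0 := by
            rw [abs_of_nonneg hnn, abs_of_nonneg hmn]
    refine step.trans ?_
    rw [Finset.sum_add_distrib, Finset.sum_add_distrib, hε'', hn, ← Finset.mul_sum, hm]
    nlinarith [hε'nn]
  -- contraction
  set d : X × A → ℝ := fun p => νπ p - max (ν p) 0 with hddef
  have hd_eq : ∀ p, d p = γ * (d ᵥ* Q) p - (e ᵥ* M) p := by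
    intro p
    have hsub : (d ᵥ* Q) p = (νπ ᵥ* Q) p - ((fun q => max (ν q) 0) ᵥ* Q) p := by
      simp only [hddef, vecMul, dotProduct, sub_mul, Finset.sum_sub_distrib]
    calc d p = ((α ᵥ* M) p + γ * (νπ ᵥ* Q) p)
          - ((α ᵥ* M) p + γ * ((fun q => max (ν q) 0) ᵥ* Q) p + (e ᵥ* M) p) := by
          rw [← hfix1 p, ← hfix2 p]
      _ = γ * ((νπ ᵥ* Q) p - ((fun q => max (ν q) 0) ᵥ* Q) p) - (e ᵥ* M) p := by ring
      _ = γ * (d ᵥ* Q) p - (e ᵥ* M) p := by rw [hsub]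
  have hD : ∑ p, |d p| ≤ (ε'' + (1 + γ) * ε') / (1 - γ) := by
    have key : ∑ p, |d p| ≤ γ * ∑ p, |d p| + (ε'' + (1 + γ) * ε') := by
      calc ∑ p, |d p| = ∑ p, |γ * (d ᵥ* Q) p - (e ᵥ* M) p| :=
            Finset.sum_congr rfl fun p _ => by rw [hd_eq p]
        _ ≤ ∑ p, (γ * |(d ᵥ* Q) p| + |(e ᵥ* M) p|) := by
            refine Finset.sum_le_sum fun p _ => ?_
            refine (abs_sub _ _).trans ?_
            rw [abs_mul, abs_of_nonneg hγ0.le]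
        _ = γ * ∑ p, |(d ᵥ* Q) p| + ∑ p, |(e ᵥ* M) p| := by
            rw [Finset.sum_add_distrib, Finset.mul_sum]
        _ ≤ γ * ∑ p, |d p| + (ε'' + (1 + γ) * ε') :=
            add_le_add (mul_le_mul_of_nonneg_left (l1_vecMul_le Q hQn hQrow d) hγ0.le)
              ((l1_vecMul_le M hMn hMrow e).trans hebound)
    rw [le_div_iff₀ h1γ]
    nlinarith [key]
  -- conclusion
  have hfin : ∑ p, |νπ p - ν p| ≤ ∑ p, |d p| + ε' := by
    rw [← hε'm, ← Finset.sum_add_distrib]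
    refine Finset.sum_le_sum fun p _ => ?_
    have hsplit : νπ p - ν p = d p + max (-ν p) 0 := by
      simp only [hddef]
      rw [hmaxid (ν p)] -- careful
      ring
    rw [hsplit]
    refine (abs_add_le _ _).trans ?_
    simp [abs_of_nonneg (le_max_right (-ν p) 0)]
  have last : (ε'' + (1 + γ) * ε') / (1 - γ) + ε' ≤ (3 * ε' + ε'') / (1 - γ) := by
    rw [div_add' _ _ _ h1γ.ne', div_le_div_iff₀ h1γ h1γ]
    nlinarith [hε'nn]
  linarith [hfin, hD, last]
end
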